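/- arXiv:2604.03419 — 2 statements merged into one kernel-verified Lean document; each statement's English description precedes it below -/
import Mathlib

section
/- Combining the τ-coverage bound and the curvature bound: if for all i and t the active sets satisfy max_{j∈A_i(t)}[∇F(x(t))]_j ≥ max{τ, 1−c}·max_{j∈P_i}[∇F(x(t))]_j, then the continuous-time ATCG trajectory satisfies F(x(t)) ≥ (1 − e^{−max{τ,1−c}·t})·F(x*) for all t ∈ [0,1]. -/
/-!
Along the trajectory, `d/dt F(x(t)) = ∑ᵢ ∂_{aᵢ} F ≥ ρ ∑ᵢ max_{Pᵢ} ∂F ≥ ρ ⟨x*, ∇F⟩ ≥ ρ (F(x*) - F(x))`,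
where `ρ = max{τ, 1 - c}`; the middle step holds because `x*` puts mass at most one on each block
and `∇F ≥ 0` by monotonicity. Hence `e^{ρt} (F(x(t)) - F(x*))` is nondecreasing, and
`F(x(0)) = f(∅) = 0`.
-/

open Finset

/-- The multilinear extension. -/
def mlext (n : ℕ) (f : Finset (Fin n) → ℝ) (x : Fin n → ℝ) : ℝ :=
  ∑ R : Finset (Fin n), f R * (∏ p ∈ R, x p) * ∏ p ∈ Rᶜ, (1 - x p)

/-- Partial derivative (gradient coordinate) of the multilinear extension. -/
def mlgrad (n : ℕ) (f : Finset (Fin n) → ℝ) (x : Fin n → ℝ) (j : Fin n) : ℝ :=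
  ∑ R ∈ ((univ : Finset (Fin n)).erase j).powerset,
    (f (insert j R) - f R) * (∏ p ∈ R, x p) *
      ∏ p ∈ ((univ : Finset (Fin n)).erase j) \ R, (1 - x p)

section MultilinearExtension

variable {n : ℕ}

/-- The probability that a random set containing each `q` independently with probability `y q`
agrees with `R` at `q`; `F(y)` is the expectation of `f` under this product distribution. -/
def mlFactor (R : Finset (Fin n)) (y : Fin n → ℝ) (q : Fin n) : ℝ :=
  if q ∈ R then y q else 1 - y q

lemma prod_mlFactor (R s : Finset (Fin n)) (y : Fin n → ℝ) :
    ∏ q ∈ s, mlFactor R y q = (∏ p ∈ s ∩ R, y p) * ∏ p ∈ s \ R, (1 - y p) := by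
  unfold mlFactor
  rw [prod_ite, filter_mem_eq_inter, inter_comm, filter_not, filter_mem_eq_inter,
    inter_comm, sdiff_inter_self_left]

lemma mlext_eq_sum_prod_mlFactor (f : Finset (Fin n) → ℝ) (y : Fin n → ℝ) :
    mlext n f y = ∑ R : Finset (Fin n), f R * ∏ q, mlFactor R y q := by
  simp only [mlext, prod_mlFactor, univ_inter, ← compl_eq_univ_sdiff, mul_assoc]

lemma mlgrad_eq_sum_prod_mlFactor (f : Finset (Fin n) → ℝ) (y : Fin n → ℝ) (j : Fin n) :
    mlgrad n f y j = ∑ R : Finset (Fin n),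
      f R * (if j ∈ R then 1 else -1) * ∏ q ∈ univ.erase j, mlFactor R y q := by
  have hj : j ∉ (univ : Finset (Fin n)).erase j := notMem_erase j univ
  have hsplit := sum_powerset_insert hj
    fun R => f R * (if j ∈ R then 1 else -1) * ∏ q ∈ univ.erase j, mlFactor R y q
  rw [insert_erase (mem_univ j), powerset_univ] at hsplit
  rw [hsplit, ← sum_add_distrib, mlgrad]
  refine sum_congr rfl fun S hS => ?_
  have hjS : j ∉ S := fun h => hj (mem_powerset.1 hS h)
  have hS' : ∀ q ∈ univ.erase j, mlFactor (insert j S) y q = mlFactor S y q := fun q hq => by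
    simp [mlFactor, ne_of_mem_erase hq]
  rw [prod_congr rfl hS', prod_mlFactor, inter_eq_right.2 (mem_powerset.1 hS)]
  simp only [hjS, mem_insert_self, if_true, if_false]
  ring

lemma hasDerivAt_mlext_comp (f : Finset (Fin n) → ℝ) {x : ℝ → Fin n → ℝ} {w : Fin n → ℝ}
    {t : ℝ} (hx : HasDerivAt x w t) :
    HasDerivAt (fun s => mlext n f (x s)) (∑ j, w j * mlgrad n f (x t) j) t := by
  have hfactor : ∀ R q, HasDerivAt (fun s => mlFactor R (x s) q)
      ((if q ∈ R then 1 else -1) * w q) t := by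
    intro R q
    have hq := hasDerivAt_pi.1 hx q
    unfold mlFactor
    split_ifs
    · simpa using hq
    · simpa using hq.const_sub 1
  have hterm := fun R : Finset (Fin n) =>
    (HasDerivAt.fun_finsetProd (u := univ) fun q _ => hfactor R q).const_mul (f R)
  simp only [mlext_eq_sum_prod_mlFactor]
  refine (HasDerivAt.fun_sum (u := univ) fun R _ => hterm R).congr_deriv ?_
  simp only [mlgrad_eq_sum_prod_mlFactor, mul_sum, smul_eq_mul]
  rw [sum_comm]
  exact sum_congr rfl fun R _ => sum_congr rfl fun q _ => by ring

lemma mlext_zero (f : Finset (Fin n) → ℝ) : mlext n f 0 = f ∅ := by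
  rw [mlext, sum_eq_single ∅]
  · simp
  · intro R _ hR
    obtain ⟨p, hp⟩ := nonempty_iff_ne_empty.2 hR
    rw [prod_eq_zero hp (by simp), mul_zero, zero_mul]
  · simp

lemma mlgrad_nonneg {f : Finset (Fin n) → ℝ} (hf : Monotone f) {y : Fin n → ℝ}
    (hy : ∀ p, y p ∈ Set.Icc (0 : ℝ) 1) (j : Fin n) : 0 ≤ mlgrad n f y j := by
  refine sum_nonneg fun S _ => mul_nonneg (mul_nonneg ?_ ?_) ?_
  · exact sub_nonneg.2 (hf (subset_insert j S))
  · exact prod_nonneg fun p _ => (hy p).1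
  · exact prod_nonneg fun p _ => sub_nonneg.2 (hy p).2

end MultilinearExtension

theorem sub_le_exp_mul_sub_of_le_hasDerivAt {g g' : ℝ → ℝ} {ρ M a b : ℝ}
    (hg : ∀ s ∈ Set.Icc a b, HasDerivAt g (g' s) s)
    (hg' : ∀ s ∈ Set.Icc a b, ρ * (M - g s) ≤ g' s) {t : ℝ} (ht : t ∈ Set.Icc a b) :
    M - g t ≤ Real.exp (-(ρ * (t - a))) * (M - g a) := by
  set e : ℝ → ℝ := fun s => Real.exp (ρ * s)
  have he : ∀ s, HasDerivAt e (e s * ρ) s := fun s => by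
    simpa using ((hasDerivAt_id s).const_mul ρ).exp
  have hmono : MonotoneOn (fun s => e s * (g s - M)) (Set.Icc a b) := by
    refine monotoneOn_of_hasDerivWithinAt_nonneg (convex_Icc a b)
      (fun s hs => ((he s).mul ((hg s hs).sub_const M)).continuousAt.continuousWithinAt)
      (fun s hs => ((he s).mul ((hg s (interior_subset hs)).sub_const M)).hasDerivWithinAt)
      fun s hs => ?_
    have hgrowth : 0 ≤ ρ * (g s - M) + g' s := by linarith [hg' s (interior_subset hs)]
    linarith [mul_nonneg (Real.exp_pos (ρ * s)).le hgrowth]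
  have hle := hmono (Set.left_mem_Icc.2 (ht.1.trans ht.2)) ht ht.1
  have hscaled := mul_le_mul_of_nonneg_left hle (Real.exp_pos (-(ρ * t))).le
  have hexp_a : Real.exp (-(ρ * t)) * e a = Real.exp (-(ρ * (t - a))) := by
    rw [← Real.exp_add]; ring_nf
  have hexp_t : Real.exp (-(ρ * t)) * e t = 1 := by
    rw [← Real.exp_add]; simp
  simp only [← mul_assoc, hexp_a, hexp_t] at hscaled
  linarith

theorem mul_sum_mul_le_sum_of_le_sup' {ι κ : Type*} [Fintype ι] [Fintype κ] [DecidableEq ι]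
    {P : κ → Finset ι} (hdisj : ∀ i i', i ≠ i' → Disjoint (P i) (P i'))
    (hcover : ∀ j, ∃ i, j ∈ P i) (hPne : ∀ i, (P i).Nonempty)
    {y G : ι → ℝ} (hy : ∀ j, 0 ≤ y j) (hyP : ∀ i, ∑ j ∈ P i, y j ≤ 1) (hG : ∀ j, 0 ≤ G j)
    {ρ : ℝ} (hρ : 0 ≤ ρ) {a : κ → ι} (ha : ∀ i, ρ * (P i).sup' (hPne i) G ≤ G (a i)) :
    ρ * ∑ j, y j * G j ≤ ∑ i, G (a i) := by
  have hblock : ∀ i, ∑ j ∈ P i, y j * G j ≤ (P i).sup' (hPne i) G := by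
    intro i
    obtain ⟨j₀, hj₀⟩ := hPne i
    have hsup : 0 ≤ (P i).sup' (hPne i) G := (hG j₀).trans (le_sup' G hj₀)
    calc ∑ j ∈ P i, y j * G j ≤ ∑ j ∈ P i, y j * (P i).sup' (hPne i) G :=
          sum_le_sum fun j hj => mul_le_mul_of_nonneg_left (le_sup' G hj) (hy j)
      _ = (∑ j ∈ P i, y j) * (P i).sup' (hPne i) G := (sum_mul ..).symm
      _ ≤ (P i).sup' (hPne i) G := mul_le_of_le_one_left hsup (hyP i)
  have hunion : univ.biUnion P = univ := eq_univ_of_forall fun j => by simpa using hcover j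
  rw [← hunion, sum_biUnion fun i _ i' _ => hdisj i i', mul_sum]
  exact sum_le_sum fun i _ => (mul_le_mul_of_nonneg_left (hblock i) hρ).trans (ha i)

theorem sum_sum_indicator_mul {ι κ : Type*} [Fintype ι] [Fintype κ] [DecidableEq ι]
    (a : κ → ι) (G : ι → ℝ) :
    ∑ j, (∑ i, if a i = j then (1 : ℝ) else 0) * G j = ∑ i, G (a i) := by
  simp only [sum_mul, ite_mul, one_mul, zero_mul]
  rw [sum_comm]
  simp

theorem atcg_curvature_aware_guarantee_general (n N : ℕ) (f : Finset (Fin n) → ℝ)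
    (hmono : ∀ A B : Finset (Fin n), A ⊆ B → f A ≤ f B)
    (hnorm : f ∅ = 0)
    (c : ℝ)
    (τ : ℝ) (hτ0 : 0 < τ)
    -- partition of the ground set
    (P : Fin N → Finset (Fin n))
    (hdisj : ∀ i i' : Fin N, i ≠ i' → Disjoint (P i) (P i'))
    (hcover : ∀ j : Fin n, ∃ i, j ∈ P i)
    (hPne : ∀ i, (P i).Nonempty)
    -- maximizer of F over the partition-matroid polytope with κ_i = 1
    (xstar : Fin n → ℝ) (hxstar_box : ∀ p, xstar p ∈ Set.Icc (0 : ℝ) 1)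
    (hxstar_mat : ∀ i, ∑ j ∈ P i, xstar j ≤ 1)
    -- key inequality of the multilinear extension (assumed, per the paper)
    (hkey : ∀ y : Fin n → ℝ, (∀ p, y p ∈ Set.Icc (0 : ℝ) 1) →
      ∑ j, xstar j * mlgrad n f y j ≥ mlext n f xstar - mlext n f y)
    -- trajectory, active sets and the per-partition active-set argmax direction
    (x v : ℝ → Fin n → ℝ)
    (A : Fin N → ℝ → Finset (Fin n))
    (hAne : ∀ i t, (A i t).Nonempty)
    (a : Fin N → ℝ → Fin n)
    (hamax : ∀ i t, ∀ j ∈ A i t, mlgrad n f (x t) j ≤ mlgrad n f (x t) (a i t))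
    (hv : ∀ t j, v t j = ∑ i : Fin N, if a i t = j then (1 : ℝ) else 0)
    (hx0 : x 0 = 0)
    (hxbox : ∀ t ∈ Set.Icc (0 : ℝ) 1, ∀ p, x t p ∈ Set.Icc (0 : ℝ) 1)
    (hxderiv : ∀ t ∈ Set.Icc (0 : ℝ) 1, HasDerivAt x (v t) t)
    -- the max{τ, 1−c}-coverage condition on the active sets
    (hcov : ∀ i, ∀ t ∈ Set.Icc (0 : ℝ) 1,
      (A i t).sup' (hAne i t) (fun j => mlgrad n f (x t) j) ≥
        max τ (1 - c) * (P i).sup' (hPne i) (fun j => mlgrad n f (x t) j)) :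
    ∀ t ∈ Set.Icc (0 : ℝ) 1,
      mlext n f (x t) ≥ (1 - Real.exp (-(max τ (1 - c)) * t)) * mlext n f xstar := by
  intro t ht
  set ρ := max τ (1 - c)
  have hρ : 0 ≤ ρ := hτ0.le.trans (le_max_left _ _)
  have hgrowth : ∀ s ∈ Set.Icc (0 : ℝ) 1,
      ρ * (mlext n f xstar - mlext n f (x s)) ≤ ∑ j, v s j * mlgrad n f (x s) j := by
    intro s hs
    have hargmax : ∀ i, ρ * (P i).sup' (hPne i) (mlgrad n f (x s)) ≤ mlgrad n f (x s) (a i s) :=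
      fun i => (hcov i s hs).trans (sup'_le _ _ (hamax i s))
    calc ρ * (mlext n f xstar - mlext n f (x s))
        ≤ ρ * ∑ j, xstar j * mlgrad n f (x s) j :=
          mul_le_mul_of_nonneg_left (hkey _ (hxbox s hs)) hρ
      _ ≤ ∑ i, mlgrad n f (x s) (a i s) :=
          mul_sum_mul_le_sum_of_le_sup' hdisj hcover hPne (fun j => (hxstar_box j).1) hxstar_mat
            (mlgrad_nonneg (fun A B => hmono A B) (hxbox s hs)) hρ hargmax
      _ = ∑ j, v s j * mlgrad n f (x s) j := by
          simp only [hv]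
          exact (sum_sum_indicator_mul _ _).symm
  have hgap := sub_le_exp_mul_sub_of_le_hasDerivAt
    (fun s hs => hasDerivAt_mlext_comp f (hxderiv s hs)) hgrowth ht
  rw [hx0, mlext_zero, hnorm, sub_zero, sub_zero] at hgap
  rw [neg_mul]
  linarith

/-- curvature-aware ATCG guarantee: with `ρ = max{τ, 1−c}`, if the
active sets satisfy the `ρ`-coverage condition
`max_{j∈A_i(t)} [∇F(x(t))]_j ≥ ρ·max_{j∈P_i} [∇F(x(t))]_j` along the continuous-time
ATCG trajectory `x′(t) = v(t)` (the per-partition active-set argmax direction),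
`x(0) = 0`, with `x*` a maximizer of `F` over the partition-matroid polytope
(`κ_i = 1`) and the key inequality `⟨x*, ∇F(x)⟩ ≥ F(x*) − F(x)`, then
`F(x(t)) ≥ (1 − e^{−ρt})·F(x*)` for all `t ∈ [0,1]`. -/
theorem atcg_curvature_aware_guarantee (n N : ℕ) (f : Finset (Fin n) → ℝ)
    (hsub : ∀ A B : Finset (Fin n), A ⊆ B → ∀ e ∉ B,
      f (insert e B) - f B ≤ f (insert e A) - f A)
    (hmono : ∀ A B : Finset (Fin n), A ⊆ B → f A ≤ f B)
    (hnorm : f ∅ = 0)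
    (c : ℝ) (hc0 : 0 ≤ c) (hc1 : c ≤ 1)
    (τ : ℝ) (hτ0 : 0 < τ) (hτ1 : τ ≤ 1)
    -- partition of the ground set
    (P : Fin N → Finset (Fin n))
    (hdisj : ∀ i i' : Fin N, i ≠ i' → Disjoint (P i) (P i'))
    (hcover : ∀ j : Fin n, ∃ i, j ∈ P i)
    (hPne : ∀ i, (P i).Nonempty)
    -- maximizer of F over the partition-matroid polytope with κ_i = 1
    (xstar : Fin n → ℝ) (hxstar_box : ∀ p, xstar p ∈ Set.Icc (0 : ℝ) 1)
    (hxstar_mat : ∀ i, ∑ j ∈ P i, xstar j ≤ 1)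
    (hxstar_opt : ∀ y : Fin n → ℝ, (∀ p, y p ∈ Set.Icc (0 : ℝ) 1) →
      (∀ i, ∑ j ∈ P i, y j ≤ 1) → mlext n f y ≤ mlext n f xstar)
    -- key inequality of the multilinear extension (assumed, per the paper)
    (hkey : ∀ y : Fin n → ℝ, (∀ p, y p ∈ Set.Icc (0 : ℝ) 1) →
      ∑ j, xstar j * mlgrad n f y j ≥ mlext n f xstar - mlext n f y)
    -- trajectory, active sets and the per-partition active-set argmax direction
    (x v : ℝ → Fin n → ℝ)
    (A : Fin N → ℝ → Finset (Fin n))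
    (hAsub : ∀ i t, A i t ⊆ P i) (hAne : ∀ i t, (A i t).Nonempty)
    (a : Fin N → ℝ → Fin n)
    (haA : ∀ i t, a i t ∈ A i t)
    (hamax : ∀ i t, ∀ j ∈ A i t, mlgrad n f (x t) j ≤ mlgrad n f (x t) (a i t))
    (hv : ∀ t j, v t j = ∑ i : Fin N, if a i t = j then (1 : ℝ) else 0)
    (hx0 : x 0 = 0)
    (hxbox : ∀ t ∈ Set.Icc (0 : ℝ) 1, ∀ p, x t p ∈ Set.Icc (0 : ℝ) 1)
    (hxderiv : ∀ t ∈ Set.Icc (0 : ℝ) 1, HasDerivAt x (v t) t)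
    -- the max{τ, 1−c}-coverage condition on the active sets
    (hcov : ∀ i, ∀ t ∈ Set.Icc (0 : ℝ) 1,
      (A i t).sup' (hAne i t) (fun j => mlgrad n f (x t) j) ≥
        max τ (1 - c) * (P i).sup' (hPne i) (fun j => mlgrad n f (x t) j)) :
    ∀ t ∈ Set.Icc (0 : ℝ) 1,
      mlext n f (x t) ≥ (1 - Real.exp (-(max τ (1 - c)) * t)) * mlext n f xstar :=
  atcg_curvature_aware_guarantee_general n N f hmono hnorm c τ hτ0 P hdisj hcover hPne xstar
    hxstar_box hxstar_mat hkey x v A hAne a hamax hv hx0 hxbox hxderiv hcov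
end

section
/- Low-curvature single-activation: suppose f has partition curvature c_i for block P_i and τ ≤ 1 − c_i. Run the ATCG expansion dynamics with exact gradients along any trajectory x(t) ∈ [0,1]^P: at t=0 the active set becomes A_i = {j°} with j° = argmax_{j∈P_i} f({j}). Then for every later time, the progress ratio satisfies max_{j∈A_i}[∇F(x(t))]_j / max_{j∈P_i}[∇F(x(t))]_j ≥ 1 − c_i ≥ τ, so the expansion condition never fires again and |A_i(T)| = 1 for all T ≥ 1. -/
open Finset

lemma weight_sum (n : ℕ) (x : Fin n → ℝ) (S : Finset (Fin n)) :
    ∑ R ∈ S.powerset, (∏ p ∈ R, x p) * ∏ p ∈ S \ R, (1 - x p) = 1 := by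
  have := Finset.prod_add (fun p => x p) (fun p => 1 - x p) S
  simp only [add_sub_cancel, Finset.prod_const_one] at this
  rw [← this]

lemma weight_nonneg (n : ℕ) (x : Fin n → ℝ) (hx : ∀ p, x p ∈ Set.Icc (0:ℝ) 1)
    (S R : Finset (Fin n)) :
    0 ≤ (∏ p ∈ R, x p) * ∏ p ∈ S \ R, (1 - x p) := by
  apply mul_nonneg
  · exact Finset.prod_nonneg fun p _ => (hx p).1
  · exact Finset.prod_nonneg fun p _ => by linarith [(hx p).2]

lemma mlgrad_le (n : ℕ) (f : Finset (Fin n) → ℝ)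
    (hsub : ∀ A B : Finset (Fin n), A ⊆ B → ∀ e ∉ B,
      f (insert e B) - f B ≤ f (insert e A) - f A)
    (hnorm : f ∅ = 0)
    (x : Fin n → ℝ) (hx : ∀ p, x p ∈ Set.Icc (0:ℝ) 1) (j : Fin n) :
    mlgrad n f x j ≤ f {j} := by
  unfold mlgrad
  calc ∑ R ∈ ((univ : Finset (Fin n)).erase j).powerset,
      (f (insert j R) - f R) * (∏ p ∈ R, x p) *
        ∏ p ∈ ((univ : Finset (Fin n)).erase j) \ R, (1 - x p)
      ≤ ∑ R ∈ ((univ : Finset (Fin n)).erase j).powerset,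
        f {j} * ((∏ p ∈ R, x p) * ∏ p ∈ ((univ : Finset (Fin n)).erase j) \ R, (1 - x p)) := by
        apply Finset.sum_le_sum
        intro R hR
        rw [mul_assoc]
        apply mul_le_mul_of_nonneg_right _ (weight_nonneg n x hx _ R)
        have hjR : j ∉ R := fun hc =>
          (Finset.mem_erase.mp ((Finset.mem_powerset.mp hR) hc)).1 rfl
        have := hsub ∅ R (Finset.empty_subset R) j hjR
        simpa [hnorm] using this
    _ = f {j} := by rw [← Finset.mul_sum, weight_sum n x _, mul_one]

lemma mlgrad_ge (n : ℕ) (f : Finset (Fin n) → ℝ) (Pi : Finset (Fin n)) (ci : ℝ)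
    (hcurv : ∀ (S : Finset (Fin n)) (p : Fin n), p ∈ Pi → p ∉ S →
      f (insert p S) - f S ≥ (1 - ci) * f {p})
    (x : Fin n → ℝ) (hx : ∀ p, x p ∈ Set.Icc (0:ℝ) 1) (j : Fin n) (hj : j ∈ Pi) :
    (1 - ci) * f {j} ≤ mlgrad n f x j := by
  unfold mlgrad
  calc (1 - ci) * f {j}
      = ∑ R ∈ ((univ : Finset (Fin n)).erase j).powerset,
        (1 - ci) * f {j} * ((∏ p ∈ R, x p) *
          ∏ p ∈ ((univ : Finset (Fin n)).erase j) \ R, (1 - x p)) := by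
        rw [← Finset.mul_sum, weight_sum n x _, mul_one]
    _ ≤ _ := by
        apply Finset.sum_le_sum
        intro R hR
        rw [mul_assoc (f (insert j R) - f R)]
        apply mul_le_mul_of_nonneg_right _ (weight_nonneg n x hx _ R)
        have hjR : j ∉ R := fun hc =>
          (Finset.mem_erase.mp ((Finset.mem_powerset.mp hR) hc)).1 rfl
        exact hcurv R j hj hjR

/-- low-curvature single-activation, Lemma 3: if `f` has partition
curvature `c_i` on block `P_i` and `τ ≤ 1 − c_i`, then running the ATCG expansion
dynamics with exact gradients along any trajectory `x(t) ∈ [0,1]^P`, the active set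
becomes `A = {j°}` at the first step (`j° = argmax_{j∈P_i} f {j}`), the progress
ratio thereafter satisfies `max_{A} ∇F / max_{P_i} ∇F ≥ 1 − c_i ≥ τ`, the expansion
condition never fires again, and `|A_i(T)| = 1` for all `T ≥ 1`. -/
theorem low_curvature_single_activation (n : ℕ) (f : Finset (Fin n) → ℝ)
    (hsub : ∀ A B : Finset (Fin n), A ⊆ B → ∀ e ∉ B,
      f (insert e B) - f B ≤ f (insert e A) - f A)
    (hmono : ∀ A B : Finset (Fin n), A ⊆ B → f A ≤ f B)
    (hnorm : f ∅ = 0)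
    (Pi : Finset (Fin n)) (hPne : Pi.Nonempty)
    (ci : ℝ) (hci0 : 0 ≤ ci) (hci1 : ci ≤ 1)
    (hcurv : ∀ (S : Finset (Fin n)) (p : Fin n), p ∈ Pi → p ∉ S →
      f (insert p S) - f S ≥ (1 - ci) * f {p})
    (τ : ℝ) (hτ0 : 0 < τ) (hτ : τ ≤ 1 - ci)
    (x : ℕ → Fin n → ℝ) (hx : ∀ t p, x t p ∈ Set.Icc (0 : ℝ) 1)
    (hpos : ∀ t, 0 < Pi.sup' hPne (fun j => mlgrad n f (x t) j))
    (j0 : Fin n) (hj0 : j0 ∈ Pi) (hbest : ∀ j ∈ Pi, f {j} ≤ f {j0})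
    (A : ℕ → Finset (Fin n))
    (hA0 : A 0 = ∅)
    (hA1 : A 1 = {j0})  -- at t = 0 the best-singleton element is activated
    (jadd : ℕ → Fin n)
    (hrec_keep : ∀ t, 1 ≤ t → ∀ h : (A t).Nonempty,
      ¬((A t).sup' h (fun j => mlgrad n f (x t) j) <
          τ * Pi.sup' hPne (fun j => mlgrad n f (x t) j)) →
      A (t + 1) = A t)
    (hrec_exp : ∀ t, 1 ≤ t → ∀ h : (A t).Nonempty,
      (A t).sup' h (fun j => mlgrad n f (x t) j) <
          τ * Pi.sup' hPne (fun j => mlgrad n f (x t) j) →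
      A t ≠ Pi → A (t + 1) = insert (jadd t) (A t)) :
    ∀ T, 1 ≤ T → A T = {j0} ∧ (A T).card = 1 ∧
      ∀ h : (A T).Nonempty,
        (A T).sup' h (fun j => mlgrad n f (x T) j) /
            Pi.sup' hPne (fun j => mlgrad n f (x T) j) ≥ 1 - ci := by
  -- key: mlgrad j0 ≥ (1-ci) * sup over Pi, for every t
  have key : ∀ t, (1 - ci) * Pi.sup' hPne (fun j => mlgrad n f (x t) j)
      ≤ mlgrad n f (x t) j0 := by
    intro t
    have hsup : Pi.sup' hPne (fun j => mlgrad n f (x t) j) ≤ f {j0} := by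
      apply Finset.sup'_le
      intro j hj
      exact le_trans (mlgrad_le n f hsub hnorm (x t) (hx t) j) (hbest j hj)
    calc (1 - ci) * Pi.sup' hPne (fun j => mlgrad n f (x t) j)
        ≤ (1 - ci) * f {j0} := mul_le_mul_of_nonneg_left hsup (by linarith)
      _ ≤ mlgrad n f (x t) j0 := mlgrad_ge n f Pi ci hcurv (x t) (hx t) j0 hj0
  -- the active set stays {j0}
  have hAeq : ∀ T, 1 ≤ T → A T = {j0} := by
    intro T hT
    induction T with
    | zero => omega
    | succ T ih =>
      rcases Nat.lt_or_ge T 1 with hT1 | hT1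
      · interval_cases T
        exact hA1
      · have hAT := ih hT1
        have hne : (A T).Nonempty := by rw [hAT]; exact ⟨j0, mem_singleton_self j0⟩
        have hsupA : (A T).sup' hne (fun j => mlgrad n f (x T) j) = mlgrad n f (x T) j0 := by
          apply le_antisymm
          · apply Finset.sup'_le
            intro j hj
            rw [hAT, Finset.mem_singleton] at hj
            rw [hj]
          · exact Finset.le_sup' _ (by rw [hAT]; exact Finset.mem_singleton_self j0)
        have hnot : ¬((A T).sup' hne (fun j => mlgrad n f (x T) j) <
            τ * Pi.sup' hPne (fun j => mlgrad n f (x T) j)) := by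
          rw [hsupA]
          push_neg
          calc τ * Pi.sup' hPne (fun j => mlgrad n f (x T) j)
              ≤ (1 - ci) * Pi.sup' hPne (fun j => mlgrad n f (x T) j) :=
                mul_le_mul_of_nonneg_right hτ (le_of_lt (hpos T))
            _ ≤ mlgrad n f (x T) j0 := key T
        rw [hrec_keep T hT1 hne hnot, hAT]
  intro T hT
  have hAT := hAeq T hT
  refine ⟨hAT, by rw [hAT]; simp, ?_⟩
  intro h
  have hsupA : (A T).sup' h (fun j => mlgrad n f (x T) j) = mlgrad n f (x T) j0 := by
    apply le_antisymm
    · apply Finset.sup'_le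
      intro j hj
      rw [hAT, Finset.mem_singleton] at hj
      rw [hj]
    · exact Finset.le_sup' _ (by rw [hAT]; exact Finset.mem_singleton_self j0)
  rw [hsupA, ge_iff_le, le_div_iff₀ (hpos T)]
  exact key T
end
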